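/- Let X be a nonnegative random variable with E[X²/loglog X] < ∞, where loglog x := ln max(e, ln max(e,x)). Then for every δ > 0 and every p > 2, ∑_{n=1}^∞ E[ (min(X, δ√(n loglog n)))^p ] / (n loglog n)^{p/2} < ∞. -/

import Mathlib

open MeasureTheory

/-- `loglog x = ln (max e (ln (max e x)))`. -/
noncomputable def loglog (x : ℝ) : ℝ :=
  Real.log (max (Real.exp 1) (Real.log (max (Real.exp 1) x)))

/-!
With `b n = (n + 1) loglog (n + 1)` and `B = (x / δ) ^ 2`, the `n`-th term evaluated at `X = x` is
at most `δ ^ p * min 1 (B / b n) ^ (p / 2)`. Up to an index `N ≈ B / loglog x + x` these terms are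
bounded by `δ ^ p`; beyond it `b n ≥ (n + 1) loglog x ≥ (n + 1) B / N`, so they are at most
`δ ^ p (N / (n + 1)) ^ (p / 2)`, whose tail is `O(N)` since `p / 2 > 1`. Hence the partial sums are
`O(1 + x ^ 2 / loglog x)` uniformly in `x`, and integrating this bound in `X` gives the claim.
-/

open Finset Real

lemma one_le_log_max_exp_one (y : ℝ) : 1 ≤ log (max (exp 1) y) :=
  (le_log_iff_exp_le (by positivity)).2 (le_max_left _ _)

lemma log_max_exp_one_le {y : ℝ} (hy : 1 ≤ y) : log (max (exp 1) y) ≤ y := by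
  rcases le_total y (exp 1) with h | h
  · rwa [max_eq_left h, log_exp]
  · rw [max_eq_right h]
    exact log_le_self (by linarith)

lemma one_le_loglog (x : ℝ) : 1 ≤ loglog x := one_le_log_max_exp_one _

lemma loglog_pos (x : ℝ) : 0 < loglog x := one_pos.trans_le (one_le_loglog x)

lemma loglog_mono : Monotone loglog := fun _ _ h =>
  log_le_log (by positivity) <| max_le_max le_rfl <| log_le_log (by positivity) <|
    max_le_max le_rfl h

lemma loglog_le_self {x : ℝ} (hx : 1 ≤ x) : loglog x ≤ x :=
  (log_max_exp_one_le (one_le_log_max_exp_one x)).trans (log_max_exp_one_le hx)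

lemma le_one_add_sq_div_loglog {x : ℝ} (hx : 0 ≤ x) : x ≤ 1 + x ^ 2 / loglog x := by
  have hq : 0 ≤ x ^ 2 / loglog x := div_nonneg (sq_nonneg x) (loglog_pos x).le
  rcases le_total x 1 with h | h
  · linarith
  · have : x ≤ x ^ 2 / loglog x := by
      rw [le_div_iff₀ (loglog_pos x)]
      nlinarith [loglog_le_self h]
    linarith

-- The tangent-line inequality at `u + 1` for the convex function `t ↦ t ^ (1 - r)`.
lemma sub_one_mul_rpow_neg_le {r u : ℝ} (hr : 1 < r) (hu : 0 < u) :
    (r - 1) * (u + 1) ^ (-r) ≤ u ^ (1 - r) - (u + 1) ^ (1 - r) := by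
  have hu1 : 0 < u + 1 := by linarith
  have bernoulli : 1 + r * u⁻¹ ≤ (1 + u⁻¹) ^ r :=
    one_add_mul_self_le_rpow_one_add (by linarith [inv_pos.2 hu]) hr.le
  have ha : 0 < u ^ r := rpow_pos_of_pos hu r
  rw [show 1 + u⁻¹ = (u + 1) / u by field_simp, div_rpow hu1.le hu.le, le_div_iff₀ ha] at bernoulli
  rw [rpow_neg hu1.le, rpow_one_sub' hu.le (by linarith), rpow_one_sub' hu1.le (by linarith)]
  have key : u / u ^ r - (u + 1) / (u + 1) ^ r - (r - 1) * ((u + 1) ^ r)⁻¹ =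
      u / (u ^ r * (u + 1) ^ r) * ((u + 1) ^ r - (1 + r * u⁻¹) * u ^ r) := by
    field_simp
    ring
  rw [← sub_nonneg, key]
  exact mul_nonneg (by positivity) (sub_nonneg.2 bernoulli)

lemma sum_range_rpow_neg_le {r u : ℝ} (hr : 1 < r) (hu : 0 < u) (M : ℕ) :
    ∑ k ∈ range M, (u + k + 1) ^ (-r) ≤ u ^ (1 - r) / (r - 1) := by
  set G : ℕ → ℝ := fun k => (u + k) ^ (1 - r)
  have step : ∀ k : ℕ, (r - 1) * (u + k + 1) ^ (-r) ≤ G k - G (k + 1) := fun k => by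
    simpa [G, add_assoc] using sub_one_mul_rpow_neg_le hr (by positivity : 0 < u + k)
  rw [le_div_iff₀ (by linarith), sum_mul]
  calc ∑ k ∈ range M, (u + k + 1) ^ (-r) * (r - 1)
      ≤ ∑ k ∈ range M, (G k - G (k + 1)) :=
        sum_le_sum fun k _ => by linarith [step k]
    _ = G 0 - G M := sum_range_sub' G M
    _ ≤ u ^ (1 - r) := by
        have : 0 ≤ G M := rpow_nonneg (by positivity) _
        simp only [G, Nat.cast_zero, add_zero]
        linarith

lemma sum_range_rpow_le_of_le_div {r : ℝ} (hr : 1 < r) {N : ℕ} (hN : 0 < N) {c : ℕ → ℝ}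
    (hc0 : ∀ n, 0 ≤ c n) (hc1 : ∀ n, c n ≤ 1) (hcN : ∀ k, c (N + k) ≤ N / (N + k + 1))
    (M : ℕ) : ∑ n ∈ range M, c n ^ r ≤ r / (r - 1) * N := by
  have hN' : (0 : ℝ) < N := Nat.cast_pos.2 hN
  have head : ∑ n ∈ range N, c n ^ r ≤ N := by
    calc ∑ n ∈ range N, c n ^ r ≤ ∑ _n ∈ range N, (1 : ℝ) :=
          sum_le_sum fun n _ => rpow_le_one (hc0 n) (hc1 n) (by linarith)
      _ = N := by simp
  have tail : ∑ k ∈ range M, c (N + k) ^ r ≤ N / (r - 1) := by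
    calc ∑ k ∈ range M, c (N + k) ^ r
        ≤ ∑ k ∈ range M, (N : ℝ) ^ r * (N + k + 1) ^ (-r) := sum_le_sum fun k _ => by
          rw [rpow_neg (by positivity), ← div_eq_mul_inv, ← div_rpow hN'.le (by positivity)]
          exact rpow_le_rpow (hc0 _) (hcN k) (by linarith)
      _ ≤ N ^ r * (N ^ (1 - r) / (r - 1)) := by
          rw [← mul_sum]
          exact mul_le_mul_of_nonneg_left (sum_range_rpow_neg_le hr hN' M) (by positivity)
      _ = N / (r - 1) := by
          rw [mul_div_assoc', ← rpow_add hN', add_sub_cancel, rpow_one]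
  calc ∑ n ∈ range M, c n ^ r ≤ ∑ n ∈ range (N + M), c n ^ r :=
        sum_le_sum_of_subset_of_nonneg (range_subset_range.2 (Nat.le_add_left M N)) fun n _ _ =>
          rpow_nonneg (hc0 n) r
    _ = ∑ n ∈ range N, c n ^ r + ∑ k ∈ range M, c (N + k) ^ r := sum_range_add _ N M
    _ ≤ N + N / (r - 1) := add_le_add head tail
    _ = r / (r - 1) * N := by field_simp [(by linarith : r - 1 ≠ 0)]; ring

lemma truncated_rpow_div_le {δ b x p : ℝ} (hδ : 0 < δ) (hb : 0 < b) (hx : 0 ≤ x) (hp : 0 ≤ p) :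
    min x (δ * √b) ^ p / b ^ (p / 2) ≤ δ ^ p * min 1 ((x / δ) ^ 2 / b) ^ (p / 2) := by
  set m := min x (δ * √b)
  have hm : 0 ≤ m := le_min hx (by positivity)
  have hsq : m ^ 2 / b ≤ δ ^ 2 * min 1 ((x / δ) ^ 2 / b) := by
    rw [mul_min_of_nonneg _ _ (sq_nonneg δ), mul_one, div_pow, mul_div_assoc',
      mul_div_cancel₀ _ (by positivity)]
    refine le_min ?_ ?_
    · rw [div_le_iff₀ hb]
      calc m ^ 2 ≤ (δ * √b) ^ 2 := pow_le_pow_left₀ hm (min_le_right _ _) 2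
        _ = δ ^ 2 * b := by rw [mul_pow, sq_sqrt hb.le]
    · exact div_le_div_of_nonneg_right (pow_le_pow_left₀ hm (min_le_left _ _) 2) hb.le
  calc m ^ p / b ^ (p / 2) = (m ^ 2 / b) ^ (p / 2) := by
        rw [div_rpow (sq_nonneg m) hb.le, ← rpow_natCast, ← rpow_mul hm]
        ring_nf
    _ ≤ (δ ^ 2 * min 1 ((x / δ) ^ 2 / b)) ^ (p / 2) :=
        rpow_le_rpow (by positivity) hsq (by positivity)
    _ = δ ^ p * min 1 ((x / δ) ^ 2 / b) ^ (p / 2) := by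
        rw [mul_rpow (sq_nonneg δ) (le_min zero_le_one (by positivity)), ← rpow_natCast,
          ← rpow_mul hδ.le]
        ring_nf

noncomputable def lilScale (n : ℕ) : ℝ := (n + 1) * loglog (n + 1)

lemma lilScale_pos (n : ℕ) : 0 < lilScale n := mul_pos (by positivity) (loglog_pos _)

lemma mul_loglog_le_lilScale {x : ℝ} {n : ℕ} (hx : x ≤ n + 1) :
    (n + 1) * loglog x ≤ lilScale n :=
  mul_le_mul_of_nonneg_left (loglog_mono hx) (by positivity)

lemma sum_range_truncated_rpow_div_le {δ p : ℝ} (hδ : 0 < δ) (hp : 2 < p) :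
    ∃ C, ∀ x, 0 ≤ x → ∀ M, ∑ n ∈ range M,
      min x (δ * √(lilScale n)) ^ p / lilScale n ^ (p / 2) ≤ C * (1 + x ^ 2 / loglog x) := by
  set r := p / 2 with hr_def
  have hr : 1 < r := by linarith
  refine ⟨r / (r - 1) * (δ ^ p / δ ^ 2 + 4 * δ ^ p), fun x hx M => ?_⟩
  set L := loglog x
  have hL : 0 < L := loglog_pos x
  set y := (x / δ) ^ 2 / L
  set N := ⌈y⌉₊ + ⌈x⌉₊ + 1
  set c : ℕ → ℝ := fun n => min 1 ((x / δ) ^ 2 / lilScale n)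
  have hyN : y ≤ N := by
    have := Nat.le_ceil y; push_cast [N]; linarith
  have hxN : x ≤ N := by
    have := Nat.le_ceil x; push_cast [N]; linarith
  have hNle : (N : ℝ) ≤ y + x + 3 := by
    have := Nat.ceil_lt_add_one (by positivity : 0 ≤ y)
    have := Nat.ceil_lt_add_one hx
    push_cast [N]; linarith
  have hcN : ∀ k, c (N + k) ≤ N / (N + k + 1) := fun k => by
    have hscale := mul_loglog_le_lilScale (x := x) (n := N + k) (by push_cast; linarith)
    calc c (N + k) ≤ (x / δ) ^ 2 / lilScale (N + k) := min_le_right _ _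
      _ ≤ (x / δ) ^ 2 / ((N + k + 1) * L) := by
          gcongr
          exact_mod_cast hscale
      _ = y / (N + k + 1) := by rw [mul_comm, ← div_div]
      _ ≤ N / (N + k + 1) := by gcongr
  have hsum := sum_range_rpow_le_of_le_div hr (by omega : 0 < N)
    (fun n => le_min zero_le_one (div_nonneg (sq_nonneg _) (lilScale_pos n).le))
    (fun n => min_le_left _ _) hcN M
  have hq := le_one_add_sq_div_loglog hx
  have hy : y = (x ^ 2 / L) / δ ^ 2 := by simp only [y, div_pow]; ring
  calc ∑ n ∈ range M, min x (δ * √(lilScale n)) ^ p / lilScale n ^ r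
      ≤ ∑ n ∈ range M, δ ^ p * c n ^ r := sum_le_sum fun n _ =>
        truncated_rpow_div_le hδ (lilScale_pos n) hx (by linarith)
    _ = δ ^ p * ∑ n ∈ range M, c n ^ r := (mul_sum _ _ _).symm
    _ ≤ δ ^ p * (r / (r - 1) * (y + x + 3)) := by gcongr; exact hsum.trans (by gcongr)
    _ = r / (r - 1) * (δ ^ p / δ ^ 2 * (x ^ 2 / L) + δ ^ p * x + 3 * δ ^ p) := by
        rw [hy]; ring
    _ ≤ r / (r - 1) * ((δ ^ p / δ ^ 2 + 4 * δ ^ p) * (1 + x ^ 2 / L)) := by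
        have hq0 : 0 ≤ x ^ 2 / L := by positivity
        have : δ ^ p * x ≤ δ ^ p * (1 + x ^ 2 / L) := by gcongr
        refine mul_le_mul_of_nonneg_left ?_ (div_nonneg (by linarith) (by linarith))
        nlinarith [rpow_pos_of_pos hδ p, div_nonneg (rpow_pos_of_pos hδ p).le (sq_nonneg δ)]
    _ = _ := by ring

theorem truncated_moment_summable {Ω : Type*} [MeasurableSpace Ω]
    (P : Measure Ω) [IsProbabilityMeasure P]
    (X : Ω → ℝ) (hmeas : Measurable X) (hnonneg : ∀ ω, 0 ≤ X ω)
    (hint : Integrable (fun ω => X ω ^ 2 / loglog (X ω)) P) :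
    ∀ δ p : ℝ, 0 < δ → 2 < p →
      Summable (fun n : ℕ =>
        (∫ ω, (min (X ω) (δ * Real.sqrt ((n + 1) * loglog (n + 1)))) ^ p ∂P) /
          ((n + 1) * loglog (n + 1)) ^ (p / 2)) := by
  intro δ p hδ hp
  obtain ⟨C, hC⟩ := sum_range_truncated_rpow_div_le hδ hp
  set f : ℕ → Ω → ℝ := fun n ω => min (X ω) (δ * √(lilScale n)) ^ p / lilScale n ^ (p / 2)
  have hmin : ∀ n ω, 0 ≤ min (X ω) (δ * √(lilScale n)) := fun n ω =>
    le_min (hnonneg ω) (by positivity)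
  have hf0 : ∀ n ω, 0 ≤ f n ω := fun n ω =>
    div_nonneg (rpow_nonneg (hmin n ω) p) (rpow_nonneg (lilScale_pos n).le _)
  have hf_int : ∀ n, Integrable (f n) P := fun n => by
    refine Integrable.of_bound (by fun_prop) ((δ * √(lilScale n)) ^ p / lilScale n ^ (p / 2))
      (ae_of_all _ fun ω => ?_)
    rw [Real.norm_of_nonneg (hf0 n ω)]
    exact div_le_div_of_nonneg_right (rpow_le_rpow (hmin n ω) (min_le_right _ _) (by linarith))
      (rpow_nonneg (lilScale_pos n).le _)
  refine summable_of_sum_range_le (c := ∫ ω, C * (1 + X ω ^ 2 / loglog (X ω)) ∂P)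
    (fun n => div_nonneg (integral_nonneg fun ω => rpow_nonneg (hmin n ω) p)
      (rpow_nonneg (lilScale_pos n).le _))
    fun M => ?_
  calc ∑ n ∈ range M, (∫ ω, min (X ω) (δ * √(lilScale n)) ^ p ∂P) / lilScale n ^ (p / 2)
      = ∫ ω, ∑ n ∈ range M, f n ω ∂P := by
        rw [integral_finsetSum _ fun n _ => hf_int n]
        simp only [f, integral_div]
    _ ≤ ∫ ω, C * (1 + X ω ^ 2 / loglog (X ω)) ∂P :=
        integral_mono (integrable_finsetSum _ fun n _ => hf_int n)
          (((integrable_const 1).add hint).const_mul C) fun ω => hC (X ω) (hnonneg ω) M
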